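/- arXiv:1407.5770 — 6 statements merged into one kernel-verified Lean document; each statement's English description precedes it below -/
import Mathlib

section
/- Let β ∈ (0, 1/2], ε = β/2, and p ∈ [β, 1]. Set b = 1 - β, C = 2/(1+b) = 1/(1-ε), and q = 1 - p, so q ≤ b. Then with γ = 1/2, k = 2.3/(γ(1-Cb)), r = exp(-2.3)/(1-γ)², the quantity (1/(1-(Cq)^k)) · { k(C-1) + C + (r/(1-r)) [ γ k (C/(1-(1-Cb)) - 1) + (1-γ)² C/(1-(1-Cb)) ] } is bounded above by 11. -/
/-!
Write `b = 1 - β ∈ [1/2, 1)`. With `C = 2/(1+b)` one has `1 - C b = (1-b)/(1+b)`, so `k (1 - C b) = 4.6`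
and the bracket collapses to `4.6 + 2/(1+b) + (r/(1-r)) (2.3 + 2.55/b)`, which decreases in `b`.
Since `0 ≤ C q ≤ C b` and `log x ≤ x - 1`, the prefactor satisfies `(C q)^k ≤ exp (k (C b - 1)) = exp (-4.6)`.
Evaluating at `b = 1/2` with `exp 2.3 ≥ 9.974` gives about `10.999`, so the estimate of `exp 2.3` has
little room.
-/

open Real

lemma exp_two_point_three_gt_d3 : (9.974 : ℝ) ≤ exp 2.3 := by
  refine le_trans ?_ (sum_le_exp_of_nonneg (x := 2.3) (by norm_num) 13)
  norm_num [Finset.sum_range_succ, Nat.factorial]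

lemma rpow_le_exp_mul_sub_one {x y k : ℝ} (hx : 0 ≤ x) (hxy : x ≤ y) (hy : 0 < y) (hk : 0 ≤ k) :
    x ^ k ≤ exp (k * (y - 1)) :=
  calc x ^ k ≤ y ^ k := rpow_le_rpow hx hxy hk
    _ = exp (log y * k) := rpow_def_of_pos hy k
    _ ≤ exp (k * (y - 1)) := by
      rw [mul_comm]
      gcongr
      exact log_le_sub_one_of_pos hy

lemma cost_bracket_eq {b C γ k : ℝ} (hb0 : 0 < b) (hb1 : b < 1) (hC : C = 2 / (1 + b))
    (hγ : γ = 1 / 2) (hk : k = 2.3 / (γ * (1 - C * b))) (R : ℝ) :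
    k * (C - 1) + C +
        R * (γ * k * (C / (1 - (1 - C * b)) - 1) + (1 - γ) ^ 2 * (C / (1 - (1 - C * b)))) =
      4.6 + 2 / (1 + b) + R * (2.3 + 2.55 / b) := by
  have hb_ne : b ≠ 0 := hb0.ne'
  have h1b : 1 - b ≠ 0 := by linarith
  have hb' : 1 + b ≠ 0 := by linarith
  have hε : 1 - C * b = (1 - b) / (1 + b) := by rw [hC]; field_simp; ring
  have hCb : C / (1 - (1 - C * b)) = 1 / b := by rw [sub_sub_cancel, hC]; field_simp
  rw [hCb]
  rw [hε] at hk
  subst hC hγ hk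
  field_simp
  ring

lemma cost_le_eleven {b P r : ℝ} (hb : 1 / 2 ≤ b) (hP : P ≤ exp (-4.6))
    (hr : r = 4 * exp (-2.3)) :
    1 / (1 - P) * (4.6 + 2 / (1 + b) + r / (1 - r) * (2.3 + 2.55 / b)) ≤ 11 := by
  have he : exp (-2.3) ≤ 1 / 9.974 := by
    rw [exp_neg, one_div]
    exact inv_anti₀ (by norm_num) exp_two_point_three_gt_d3
  have hP' : P ≤ (1 / 9.974) ^ 2 := by
    calc P ≤ exp (-2.3) ^ 2 := by rw [← exp_nat_mul]; norm_num at hP ⊢; exact hP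
      _ ≤ (1 / 9.974) ^ 2 := by gcongr
  have hr0 : 0 ≤ r := by rw [hr]; positivity
  have hr' : r ≤ 4 / 9.974 := by rw [hr]; linarith
  have hprefactor : 1 / (1 - P) ≤ 1 / (1 - (1 / 9.974) ^ 2) :=
    one_div_le_one_div_of_le (by norm_num) (by linarith)
  have hratio : r / (1 - r) ≤ (4 / 9.974) / (1 - 4 / 9.974) :=
    div_le_div₀ (by norm_num) hr' (by norm_num) (by linarith)
  have hC_le : 2 / (1 + b) ≤ 4 / 3 := by rw [div_le_div_iff₀ (by linarith) (by norm_num)]; linarith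
  have hinv_le : 2.55 / b ≤ 5.1 := by rw [div_le_iff₀ (by linarith)]; linarith
  have hbracket : 4.6 + 2 / (1 + b) + r / (1 - r) * (2.3 + 2.55 / b) ≤
      4.6 + 4 / 3 + (4 / 9.974) / (1 - 4 / 9.974) * 7.4 := by
    gcongr
    linarith
  calc 1 / (1 - P) * (4.6 + 2 / (1 + b) + r / (1 - r) * (2.3 + 2.55 / b))
      ≤ 1 / (1 - (1 / 9.974) ^ 2) * (4.6 + 4 / 3 + (4 / 9.974) / (1 - 4 / 9.974) * 7.4) := by
        have : 0 ≤ 1 - r := by linarith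
        gcongr
    _ ≤ 11 := by norm_num

/-- the explicit numerical bound in the Huber Bernoulli factory cost analysis. -/
theorem stmt_3 (β p b C q γ k r : ℝ)
    (hβ0 : 0 < β) (hβ : β ≤ 1 / 2) (hp1 : β ≤ p) (hp2 : p ≤ 1)
    (hb : b = 1 - β) (hC : C = 2 / (1 + b)) (hq : q = 1 - p) (hγ : γ = 1 / 2)
    (hk : k = 2.3 / (γ * (1 - C * b))) (hr : r = Real.exp (-2.3) / (1 - γ) ^ 2) :
    (1 / (1 - (C * q) ^ k)) *
      (k * (C - 1) + C +
        (r / (1 - r)) *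
          (γ * k * (C / (1 - (1 - C * b)) - 1) + (1 - γ) ^ 2 * (C / (1 - (1 - C * b)))))
      ≤ 11 := by
  have hb0 : 0 < b := by linarith
  have hb1 : b < 1 := by linarith
  have hCb : 1 - C * b = (1 - b) / (1 + b) := by rw [hC]; field_simp; ring
  have hεpos : 0 < 1 - C * b := by rw [hCb]; exact div_pos (by linarith) (by linarith)
  have hk0 : 0 ≤ k := by rw [hk, hγ]; positivity
  have hkCb : k * (C * b - 1) = -4.6 := by rw [hk, hγ]; field_simp; ring
  have hpow : (C * q) ^ k ≤ exp (-4.6) := by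
    rw [← hkCb]
    have hC0 : 0 < C := by rw [hC]; positivity
    exact rpow_le_exp_mul_sub_one (mul_nonneg hC0.le (by linarith)) (by gcongr; linarith)
      (mul_pos hC0 hb0) hk0
  rw [cost_bracket_eq hb0 hb1 hC hγ hk]
  exact cost_le_eleven (by linarith) hpow (by rw [hr, hγ]; ring)
end

section
/- Let m ∈ ℕ, m ≥ 2, β = 1/m, and p ∈ [0, β). Let (B_i)_{i≥1} be i.i.d. Bernoulli(p) and τ := inf{n ≥ 1 : (1/n)Σ_{i=1}^n B_i > β}. Then P(τ < ∞) = p(m-1)/(1-p). -/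
/-!
Let `S n = ∑_{i<n} (m B_i - 1)`; its steps are `m - 1` or `-1`, so it never moves down by more
than one. Call `k` a strict future maximum if `S n < S k` for all `n > k`. Because the walk is
skip-free downwards, the number of strict future maxima below `N` equals `M 0 - M N`, where
`M N = max_{n ≥ N} S n`. The strong law gives `S n / n → m p - 1 < 0`, hence `M N / N → m p - 1`,
so the frequency of strict future maxima tends to `1 - m p` almost surely. By stationarity every
`k` is a strict future maximum with the same probability `α`, and bounded convergence yields
`α = 1 - m p`. Finally `0` is a strict future maximum iff `B 0` is false and the walk started
at time `1` never becomes positive, so by independence `α = (1 - p) P(S n ≤ 0 for all n)`.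
-/

open MeasureTheory ProbabilityTheory Filter Finset Topology

namespace ProbabilityTheory

variable {Ω β : Type*} [MeasurableSpace Ω] [MeasurableSpace β] {P : Measure Ω}
  {X : ℕ → Ω → β}

lemma iIndepFun.map_shift_eq (hX : ∀ i, Measurable (X i)) (hident : ∀ i, P.map (X i) = P.map (X 0))
    (h : iIndepFun X P) (k : ℕ) :
    P.map (fun ω i => X (k + i) ω) = P.map (fun ω i => X i ω) := by
  rw [(h.precomp (add_right_injective k)).map_fun_eq_infinitePi_map fun i => hX (k + i),
    h.map_fun_eq_infinitePi_map hX]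
  simp only [hident]

lemma iIndepFun.measureReal_shift_preimage (hX : ∀ i, Measurable (X i))
    (hident : ∀ i, P.map (X i) = P.map (X 0)) (h : iIndepFun X P) (k : ℕ) {S : Set (ℕ → β)}
    (hS : MeasurableSet S) :
    P.real ((fun ω i => X (k + i) ω) ⁻¹' S) = P.real ((fun ω i => X i ω) ⁻¹' S) := by
  rw [← map_measureReal_apply (measurable_pi_lambda _ fun i => hX (k + i)) hS,
    ← map_measureReal_apply (measurable_pi_lambda _ hX) hS, h.map_shift_eq hX hident k]

lemma iIndepFun.indepFun_shift_one (hX : ∀ i, Measurable (X i)) (h : iIndepFun X P) :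
    IndepFun (X 0) (fun ω i => X (1 + i) ω) P := by
  have hind := indep_iSup_of_disjoint (fun i => (hX i).comap_le) h
    (Set.disjoint_singleton_left.2 (Set.notMem_compl_iff.2 rfl) : Disjoint {0} {0}ᶜ)
  rw [IndepFun_iff_Indep]
  refine indep_of_indep_of_le_right (indep_of_indep_of_le_left hind ?_) ?_
  · exact le_biSup (fun i => MeasurableSpace.comap (X i) _) (Set.mem_singleton 0)
  · refine Measurable.comap_le (@measurable_pi_lambda _ _ _ (_) _ _ fun i =>
      Measurable.of_comap_le ?_)
    exact le_biSup (fun j => MeasurableSpace.comap (X j) _) (by simp : 1 + i ∈ ({0} : Set ℕ)ᶜ)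

end ProbabilityTheory

lemma MeasureTheory.Measure.ext_bool_of_apply_true {μ ν : Measure Bool} [IsProbabilityMeasure μ]
    [IsProbabilityMeasure ν] (h : μ {true} = ν {true}) : μ = ν := by
  refine Measure.ext_iff_singleton.2 fun a => ?_
  cases a
  · rw [show ({false} : Set Bool) = {true}ᶜ by ext x; cases x <;> simp,
      prob_compl_eq_one_sub (measurableSet_singleton _),
      prob_compl_eq_one_sub (measurableSet_singleton _), h]
  · exact h

namespace SkipFreeWalk

def IsStrictFutureMax (s : ℕ → ℤ) (k : ℕ) : Prop := ∀ n, k < n → s n < s k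

-- Junk (`0`) when `s` is unbounded above; every lemma below assumes `BddAbove (Set.range s)`.
noncomputable def futureMax (s : ℕ → ℤ) (N : ℕ) : ℤ := ⨆ n, s (N + n)

section futureMax

variable {s : ℕ → ℤ}

lemma bddAbove_range_add (hs : BddAbove (Set.range s)) (N : ℕ) :
    BddAbove (Set.range fun n => s (N + n)) :=
  hs.mono (Set.range_comp_subset_range _ s)

lemma le_futureMax (hs : BddAbove (Set.range s)) (N n : ℕ) : s (N + n) ≤ futureMax s N :=
  le_ciSup (bddAbove_range_add hs N) n

lemma exists_eq_futureMax (hs : BddAbove (Set.range s)) (N : ℕ) :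
    ∃ n, s (N + n) = futureMax s N :=
  Int.csSup_mem (Set.range_nonempty _) (bddAbove_range_add hs N)

lemma futureMax_succ_lt_iff (hs : BddAbove (Set.range s)) (N : ℕ) :
    futureMax s (N + 1) < s N ↔ IsStrictFutureMax s N := by
  constructor
  · intro h n hn
    obtain ⟨k, rfl⟩ := Nat.exists_eq_add_of_lt hn
    exact (Nat.add_right_comm N k 1 ▸ le_futureMax hs (N + 1) k).trans_lt h
  · intro h
    obtain ⟨n, hn⟩ := exists_eq_futureMax hs (N + 1)
    exact hn ▸ h _ (by omega)

lemma futureMax_eq_max (hs : BddAbove (Set.range s)) (N : ℕ) :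
    futureMax s N = max (s N) (futureMax s (N + 1)) := by
  refine le_antisymm (ciSup_le fun n => ?_) (max_le (le_futureMax hs N 0) ?_)
  · rcases n with _ | n
    · exact le_max_left _ _
    · exact (show N + (n + 1) = N + 1 + n by omega) ▸ le_max_of_le_right (le_futureMax hs _ n)
  · exact ciSup_le fun n => (show N + 1 + n = N + (n + 1) by omega) ▸ le_futureMax hs N _

lemma futureMax_eq_succ_add (hs : BddAbove (Set.range s)) (hstep : ∀ n, s n - 1 ≤ s (n + 1))
    (N : ℕ) [Decidable (IsStrictFutureMax s N)] :
    futureMax s N = futureMax s (N + 1) + if IsStrictFutureMax s N then 1 else 0 := by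
  rw [futureMax_eq_max hs]
  by_cases h : IsStrictFutureMax s N
  · have hlt := (futureMax_succ_lt_iff hs N).2 h
    have := add_zero (N + 1) ▸ le_futureMax hs (N + 1) 0
    have := hstep N
    rw [if_pos h, max_eq_left hlt.le]
    omega
  · rw [if_neg h, add_zero, max_eq_right (not_lt.1 ((futureMax_succ_lt_iff hs N).not.2 h))]

lemma card_isStrictFutureMax_eq (hs : BddAbove (Set.range s)) (hstep : ∀ n, s n - 1 ≤ s (n + 1))
    (N : ℕ) [DecidablePred (IsStrictFutureMax s)] :
    (#{k ∈ range N | IsStrictFutureMax s k} : ℤ) = futureMax s 0 - futureMax s N := by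
  induction N with
  | zero => simp
  | succ N ih =>
    rw [range_add_one, filter_insert]
    rw [futureMax_eq_succ_add hs hstep N] at ih
    split_ifs at ih ⊢ with h
    · rw [card_insert_of_notMem (by simp)]
      push_cast
      omega
    · omega

lemma tendsto_atBot_of_tendsto_div {c : ℝ} (hc : Tendsto (fun n => (s n : ℝ) / n) atTop (𝓝 c))
    (hc0 : c < 0) : Tendsto s atTop atBot := by
  rw [← tendsto_intCast_atBot_iff (R := ℝ)]
  refine tendsto_atBot_mono' atTop ?_
    (tendsto_natCast_atTop_atTop.atTop_mul_const_of_neg (by linarith : c / 2 < 0))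
  filter_upwards [hc.eventually (eventually_lt_nhds (by linarith : c < c / 2)),
    eventually_gt_atTop 0] with n hn hn0
  rw [div_lt_iff₀ (by exact_mod_cast hn0), mul_comm] at hn
  exact hn.le

lemma tendsto_futureMax_div {c : ℝ} (hc : Tendsto (fun n => (s n : ℝ) / n) atTop (𝓝 c))
    (hc0 : c < 0) : Tendsto (fun N => (futureMax s N : ℝ) / N) atTop (𝓝 c) := by
  have hbot := tendsto_atBot_of_tendsto_div hc hc0
  have hs := bddAbove_range_of_tendsto_atTop_atBot hbot
  choose g hg using exists_eq_futureMax hs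
  have hgrow : Tendsto (fun N => N + g N) atTop atTop :=
    tendsto_atTop_mono (fun N => Nat.le_add_right N (g N)) tendsto_id
  have hupper : Tendsto (fun N => (s (N + g N) : ℝ) / (N + g N : ℕ)) atTop (𝓝 c) :=
    hc.comp hgrow
  refine tendsto_of_tendsto_of_tendsto_of_le_of_le' hc hupper ?_ ?_
  · filter_upwards with N
    exact div_le_div_of_nonneg_right (by exact_mod_cast add_zero N ▸ le_futureMax hs N 0)
      (Nat.cast_nonneg N)
  · filter_upwards [hgrow.eventually (hbot.eventually_le_atBot 0), eventually_gt_atTop 0]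
      with N hneg hN
    have hN' : (0 : ℝ) < N := by exact_mod_cast hN
    have hneg' : (s (N + g N) : ℝ) ≤ 0 := by exact_mod_cast hneg
    rw [← hg N, div_le_div_iff₀ hN' (by positivity)]
    push_cast
    nlinarith [(g N).cast_nonneg (α := ℝ)]

lemma tendsto_card_isStrictFutureMax_div (hstep : ∀ n, s n - 1 ≤ s (n + 1)) {c : ℝ}
    (hc : Tendsto (fun n => (s n : ℝ) / n) atTop (𝓝 c)) (hc0 : c < 0)
    [DecidablePred (IsStrictFutureMax s)] :
    Tendsto (fun N => (#{k ∈ range N | IsStrictFutureMax s k} : ℝ) / N) atTop (𝓝 (-c)) := by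
  have hs := bddAbove_range_of_tendsto_atTop_atBot (tendsto_atBot_of_tendsto_div hc hc0)
  have h := (tendsto_const_div_atTop_nhds_zero_nat (futureMax s 0 : ℝ)).sub
    (tendsto_futureMax_div hc hc0)
  rw [zero_sub] at h
  refine h.congr fun N => ?_
  have hcard : (#{k ∈ range N | IsStrictFutureMax s k} : ℝ) = futureMax s 0 - futureMax s N := by
    exact_mod_cast card_isStrictFutureMax_eq hs hstep N
  rw [hcard, sub_div]

end futureMax

def walk (m : ℕ) (b : ℕ → Bool) (n : ℕ) : ℤ := ∑ i ∈ range n, if b i then (m : ℤ) - 1 else -1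

section walk

variable {m : ℕ} {b : ℕ → Bool}

lemma walk_zero : walk m b 0 = 0 := rfl

lemma walk_add (k n : ℕ) : walk m b (k + n) = walk m b k + walk m (fun i => b (k + i)) n :=
  sum_range_add _ k n

lemma walk_succ (n : ℕ) :
    walk m b (n + 1) = walk m b n + if b n then (m : ℤ) - 1 else -1 :=
  sum_range_succ _ n

lemma walk_sub_one_le (n : ℕ) : walk m b n - 1 ≤ walk m b (n + 1) := by
  rw [walk_succ]
  split_ifs <;> omega

lemma isStrictFutureMax_walk_iff (k : ℕ) :
    IsStrictFutureMax (walk m b) k ↔ IsStrictFutureMax (walk m fun i => b (k + i)) 0 := by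
  simp only [IsStrictFutureMax, walk_zero]
  constructor
  · intro h n hn
    have := h (k + n) (by omega)
    rw [walk_add] at this
    omega
  · intro h n hn
    obtain ⟨j, rfl⟩ := Nat.exists_eq_add_of_lt hn
    have := h (j + 1) (by omega)
    rw [show k + j + 1 = k + (j + 1) by omega, walk_add]
    omega

lemma isStrictFutureMax_walk_zero_iff (hm : 1 ≤ m) :
    IsStrictFutureMax (walk m b) 0 ↔ b 0 = false ∧ ∀ n, walk m (fun i => b (1 + i)) n ≤ 0 := by
  have hstep (n : ℕ) : walk m b (1 + n) = (if b 0 then (m : ℤ) - 1 else -1)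
      + walk m (fun i => b (1 + i)) n := by
    rw [walk_add]; simp [walk]
  simp only [IsStrictFutureMax, walk_zero]
  constructor
  · intro h
    have h1 := hstep 0 ▸ h 1 one_pos
    refine ⟨?_, fun n => ?_⟩
    · cases hb : b 0 <;> simp_all [walk_zero]
    · have := hstep n ▸ h (1 + n) (by omega)
      split_ifs at this <;> omega
  · rintro ⟨hb, h⟩ n hn
    obtain ⟨j, rfl⟩ := Nat.exists_eq_add_of_lt hn
    have := h j
    rw [zero_add, add_comm, hstep, hb]
    simp only [Bool.false_eq_true, if_false]
    omega

lemma measurable_walk (m n : ℕ) : Measurable fun b : ℕ → Bool => walk m b n :=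
  Finset.measurable_sum _ fun i _ =>
    (Measurable.of_discrete (f := fun x : Bool => if x then (m : ℤ) - 1 else -1)).comp
      (measurable_pi_apply i)

lemma measurableSet_isStrictFutureMax_walk (m k : ℕ) :
    MeasurableSet {b : ℕ → Bool | IsStrictFutureMax (walk m b) k} := by
  simp only [IsStrictFutureMax, Set.ofPred_forall]
  exact .iInter fun n => .iInter fun _ =>
    measurableSet_lt (measurable_walk m n) (measurable_walk m k)

lemma measurableSet_walk_nonpos (m : ℕ) :
    MeasurableSet {b : ℕ → Bool | ∀ n, walk m b n ≤ 0} := by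
  simp only [Set.ofPred_forall]
  exact .iInter fun n => measurableSet_le (measurable_walk m n) measurable_const

lemma inv_mul_lt_sum_iff_walk_pos (hm : 0 < m) (n : ℕ) :
    (m : ℝ)⁻¹ * n < ∑ i ∈ range n, (if b i then (1 : ℝ) else 0) ↔ 0 < walk m b n := by
  have hwalk : (walk m b n : ℝ) = m * ∑ i ∈ range n, (if b i then (1 : ℝ) else 0) - n := by
    induction n with
    | zero => simp [walk_zero]
    | succ n ih =>
      rw [walk_succ, sum_range_succ]
      push_cast
      split_ifs <;> linarith
  rw [inv_mul_lt_iff₀ (by exact_mod_cast hm), ← Int.cast_pos (R := ℝ), hwalk, sub_pos]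

lemma exists_inv_mul_lt_sum_iff (hm : 0 < m) :
    (∃ n, 1 ≤ n ∧ (m : ℝ)⁻¹ * n < ∑ i ∈ range n, (if b i then (1 : ℝ) else 0))
      ↔ ¬ ∀ n, walk m b n ≤ 0 := by
  simp only [inv_mul_lt_sum_iff_walk_pos hm, not_forall, not_le]
  exact ⟨fun ⟨n, _, hn⟩ => ⟨n, hn⟩, fun ⟨n, hn⟩ =>
    ⟨n, Nat.one_le_iff_ne_zero.2 fun h => by simp [h, walk_zero] at hn, hn⟩⟩

end walk

section bernoulli

variable {Ω : Type*} [MeasurableSpace Ω] {P : Measure Ω} [IsProbabilityMeasure P] {p : ℝ}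
  {B : ℕ → Ω → Bool}

lemma map_eq_map_zero (hmeas : ∀ n, Measurable (B n))
    (hB : ∀ n, P {ω | B n ω = true} = ENNReal.ofReal p) (i : ℕ) : P.map (B i) = P.map (B 0) := by
  have := Measure.isProbabilityMeasure_map (μ := P) (hmeas i).aemeasurable
  have := Measure.isProbabilityMeasure_map (μ := P) (hmeas 0).aemeasurable
  refine Measure.ext_bool_of_apply_true ?_
  rw [Measure.map_apply (hmeas i) (measurableSet_singleton _),
    Measure.map_apply (hmeas 0) (measurableSet_singleton _)]
  exact (hB i).trans (hB 0).symm

lemma ae_tendsto_walk_div (hmeas : ∀ n, Measurable (B n)) (hindep : iIndepFun B P)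
    (hB : ∀ n, P {ω | B n ω = true} = ENNReal.ofReal p) (hp0 : 0 ≤ p) (m : ℕ) :
    ∀ᵐ ω ∂P, Tendsto (fun n => (walk m (fun i => B i ω) n : ℝ) / n) atTop (𝓝 (m * p - 1)) := by
  set f : Bool → ℝ := fun x => if x then (m : ℝ) - 1 else -1
  have hf : Measurable f := .of_discrete
  have hmap0 := Measure.isProbabilityMeasure_map (μ := P) (hmeas 0).aemeasurable
  have htrue : (P.map (B 0)).real {true} = p := by
    rw [map_measureReal_apply (hmeas 0) (measurableSet_singleton _), measureReal_def]
    change (P {ω | B 0 ω = true}).toReal = p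
    rw [hB 0, ENNReal.toReal_ofReal hp0]
  have hmean : P[f ∘ B 0] = m * p - 1 := by
    rw [Function.comp_def, ← integral_map (hmeas 0).aemeasurable hf.aestronglyMeasurable,
      integral_fintype .of_finite, Fintype.sum_bool,
      show ({false} : Set Bool) = {true}ᶜ by ext x; cases x <;> simp,
      probReal_compl_eq_one_sub (measurableSet_singleton _), htrue]
    simp only [f, if_true, Bool.false_eq_true, if_false, smul_eq_mul]
    ring
  have hslln := strong_law_ae (fun i => f ∘ B i)
    ((Integrable.of_finite).comp_measurable (hmeas 0))
    (fun i j hij => (hindep.indepFun hij).comp hf hf)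
    (fun i => (IdentDistrib.mk (hmeas i).aemeasurable (hmeas 0).aemeasurable
      (map_eq_map_zero hmeas hB i)).comp hf)
  filter_upwards [hslln] with ω hω
  rw [hmean] at hω
  refine hω.congr fun n => ?_
  simp only [walk, smul_eq_mul, inv_mul_eq_div, Function.comp_apply, f]
  push_cast
  rfl

lemma measureReal_isStrictFutureMax_walk_eq (hmeas : ∀ n, Measurable (B n)) (hindep : iIndepFun B P)
    (hB : ∀ n, P {ω | B n ω = true} = ENNReal.ofReal p) (m k : ℕ) :
    P.real {ω | IsStrictFutureMax (walk m fun i => B i ω) k}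
      = P.real {ω | IsStrictFutureMax (walk m fun i => B i ω) 0} := by
  simp only [isStrictFutureMax_walk_iff k]
  exact hindep.measureReal_shift_preimage hmeas (map_eq_map_zero hmeas hB) k
    (measurableSet_isStrictFutureMax_walk m 0)

lemma measureReal_isStrictFutureMax_walk_zero (hmeas : ∀ n, Measurable (B n))
    (hindep : iIndepFun B P) (hB : ∀ n, P {ω | B n ω = true} = ENNReal.ofReal p) (hp0 : 0 ≤ p)
    {m : ℕ} (hmp : m * p < 1) :
    P.real {ω | IsStrictFutureMax (walk m fun i => B i ω) 0} = 1 - m * p := by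
  classical
  set E : ℕ → Set Ω := fun k => {ω | IsStrictFutureMax (walk m fun i => B i ω) k}
  have hE (k : ℕ) : MeasurableSet (E k) :=
    measurable_pi_lambda _ hmeas (measurableSet_isStrictFutureMax_walk m k)
  set F : ℕ → Ω → ℝ := fun N ω => (∑ k ∈ range N, (E k).indicator 1 ω) / N
  have hF (N : ℕ) (ω : Ω) :
      F N ω = (#{k ∈ range N | IsStrictFutureMax (walk m fun i => B i ω) k} : ℝ) / N := by
    simp only [F, natCast_card_filter, Set.indicator_apply, E, Set.mem_ofPred_eq, Pi.one_apply]
  have hint (N : ℕ) (hN : 1 ≤ N) : ∫ ω, F N ω ∂P = P.real (E 0) := by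
    rw [integral_div, integral_finsetSum _ fun k _ => (integrable_const 1).indicator (hE k),
      sum_congr rfl fun k _ => integral_indicator_one (hE k)]
    simp only [E, measureReal_isStrictFutureMax_walk_eq hmeas hindep hB m, sum_const, card_range,
      nsmul_eq_mul]
    field_simp
  have hlim : ∀ᵐ ω ∂P, Tendsto (F · ω) atTop (𝓝 (1 - m * p)) := by
    filter_upwards [ae_tendsto_walk_div hmeas hindep hB hp0 m] with ω hω
    simp only [hF, ← neg_sub (m * p : ℝ)]
    exact tendsto_card_isStrictFutureMax_div (fun n => walk_sub_one_le n) hω (by linarith)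
  have hbound (N : ℕ) (ω : Ω) : ‖F N ω‖ ≤ 1 := by
    rw [hF, Real.norm_of_nonneg (by positivity)]
    refine div_le_one_of_le₀ ?_ (Nat.cast_nonneg N)
    exact_mod_cast (card_filter_le _ _).trans (card_range N).le
  have hdom := tendsto_integral_of_dominated_convergence (fun _ => 1)
    (fun N => ((Finset.measurable_sum _ fun k _ => measurable_const.indicator (hE k)).div_const
      _).aestronglyMeasurable) (integrable_const 1) (fun N => ae_of_all _ (hbound N)) hlim
  rw [integral_const, probReal_univ, one_smul] at hdom
  exact tendsto_nhds_unique (tendsto_const_nhds.congr' ((eventually_ge_atTop 1).mono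
    fun N hN => (hint N hN).symm)) hdom

lemma measureReal_isStrictFutureMax_walk_zero_eq_mul (hmeas : ∀ n, Measurable (B n))
    (hindep : iIndepFun B P) (hB : ∀ n, P {ω | B n ω = true} = ENNReal.ofReal p) (hp0 : 0 ≤ p)
    {m : ℕ} (hm : 1 ≤ m) :
    P.real {ω | IsStrictFutureMax (walk m fun i => B i ω) 0}
      = (1 - p) * P.real {ω | ∀ n, walk m (fun i => B i ω) n ≤ 0} := by
  have hset : {ω | IsStrictFutureMax (walk m fun i => B i ω) 0}
      = B 0 ⁻¹' {true}ᶜ ∩ (fun ω i => B (1 + i) ω) ⁻¹' {b | ∀ n, walk m b n ≤ 0} := by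
    ext ω
    simp [isStrictFutureMax_walk_zero_iff hm]
  have hfalse : P.real (B 0 ⁻¹' {true}ᶜ) = 1 - p := by
    rw [Set.preimage_compl, probReal_compl_eq_one_sub (hmeas 0 (measurableSet_singleton _)),
      measureReal_def]
    change 1 - (P {ω | B 0 ω = true}).toReal = 1 - p
    rw [hB 0, ENNReal.toReal_ofReal hp0]
  rw [hset, measureReal_def, (hindep.indepFun_shift_one hmeas).measure_inter_preimage_eq_mul _ _
      (measurableSet_singleton _).compl (measurableSet_walk_nonpos m),
    ENNReal.toReal_mul, ← measureReal_def, ← measureReal_def, hfalse,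
    hindep.measureReal_shift_preimage hmeas (map_eq_map_zero hmeas hB) 1
      (measurableSet_walk_nonpos m)]
  rfl

end bernoulli

end SkipFreeWalk

open SkipFreeWalk

theorem stmt_9_general {Ω : Type*} [MeasurableSpace Ω] (P : Measure Ω) [IsProbabilityMeasure P]
    (m : ℕ) (p : ℝ) (hp0 : 0 ≤ p) (hpβ : p < (m : ℝ)⁻¹)
    (B : ℕ → Ω → Bool) (hmeas : ∀ n, Measurable (B n))
    (hindep : iIndepFun B P)
    (hB : ∀ n, P {ω | B n ω = true} = ENNReal.ofReal p) :
    P {ω | ∃ n, 1 ≤ n ∧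
        (m : ℝ)⁻¹ * n < ∑ i ∈ Finset.range n, (if B i ω = true then (1 : ℝ) else 0)}
      = ENNReal.ofReal (p * (m - 1) / (1 - p)) := by
  have hm : 0 < m := Nat.pos_of_ne_zero fun h => by simp [h] at hpβ; linarith
  have hm1 : (1 : ℝ) ≤ m := by exact_mod_cast hm
  have hmp : m * p < 1 := (lt_inv_mul_iff₀ (by linarith)).1 (by rwa [mul_one])
  have hp1 : 1 - p ≠ 0 := by nlinarith
  have hS : MeasurableSet {ω | ∀ n, walk m (fun i => B i ω) n ≤ 0} :=
    measurable_pi_lambda _ hmeas (measurableSet_walk_nonpos m)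
  have hevent : {ω | ∃ n, 1 ≤ n ∧
      (m : ℝ)⁻¹ * n < ∑ i ∈ Finset.range n, (if B i ω = true then (1 : ℝ) else 0)}
      = {ω | ∀ n, walk m (fun i => B i ω) n ≤ 0}ᶜ :=
    Set.ext fun ω => exists_inv_mul_lt_sum_iff hm
  have hsplit := measureReal_isStrictFutureMax_walk_zero_eq_mul hmeas hindep hB hp0 hm
  rw [measureReal_isStrictFutureMax_walk_zero hmeas hindep hB hp0 hmp] at hsplit
  rw [hevent, ← ofReal_measureReal, probReal_compl_eq_one_sub hS]
  congr 1
  rw [eq_div_iff hp1]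
  linear_combination hsplit

/-- for β = 1/m and i.i.d. Bernoulli(p) coins with p < β, the probability
that the running average ever exceeds β equals p(m-1)/(1-p). -/
theorem stmt_9 {Ω : Type*} [MeasurableSpace Ω] (P : Measure Ω) [IsProbabilityMeasure P]
    (m : ℕ) (hm : 2 ≤ m) (p : ℝ) (hp0 : 0 ≤ p) (hpβ : p < (m : ℝ)⁻¹)
    (B : ℕ → Ω → Bool) (hmeas : ∀ n, Measurable (B n))
    (hindep : iIndepFun B P)
    (hB : ∀ n, P {ω | B n ω = true} = ENNReal.ofReal p) :
    P {ω | ∃ n, 1 ≤ n ∧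
        (m : ℝ)⁻¹ * n < ∑ i ∈ Finset.range n, (if B i ω = true then (1 : ℝ) else 0)}
      = ENNReal.ofReal (p * (m - 1) / (1 - p)) :=
  stmt_9_general P m p hp0 hpβ B hmeas hindep hB
end

section
/- Let Π and Π̃ be Markov kernels on a measurable space X satisfying Doeblin minorizations Π(x,·) ≥ ε̲ ν(·) and Π̃(x,·) ≥ ε ν(·) for all x, with probability measure ν and 0 < ε̲ ≤ ε < 1, so that each is uniformly ergodic with unique invariant distributions π and π̃ satisfying ‖Π̃^n(x,·) - π̃‖_TV ≤ (1-ε)^n. If sup_x ‖Π̃(x,·) - Π(x,·)‖_TV ≤ ε - ε̲, then ‖π̃ - π‖_TV ≤ 1 - ε̲/ε. -/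
/-!
Measure distances by `d(μ, μ') = sup_A |μ A - μ' A|`. Under `Π̃(x, ·) ≥ ε ν` the function
`x ↦ Π̃(x, A) - ε ν(A)` takes values in `[0, 1 - ε]`, so by the layer-cake formula one step of
`Π̃` contracts `d` by `1 - ε`, while swapping `Π` for `Π̃` in one step moves any law by at most
`δ = ε - ε̲`. Hence `d(π̃, π) = d(π̃ Π̃, π Π) ≤ d(π̃ Π̃, π Π̃) + d(π Π̃, π Π) ≤ (1 - ε) d(π̃, π) + δ`,
i.e. `d(π̃, π) ≤ δ / ε`; no iteration of the chains or limit is needed.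
-/

open MeasureTheory ProbabilityTheory Set

namespace MeasureTheory

variable {X : Type*} [MeasurableSpace X]

noncomputable def tvDist (μ μ' : Measure X) : ℝ :=
  ⨆ s : {s : Set X // MeasurableSet s}, |μ.real s - μ'.real s|

variable {μ μ' μ'' : Measure X}

lemma abs_measureReal_sub_le_tvDist [IsFiniteMeasure μ] [IsFiniteMeasure μ'] {s : Set X}
    (hs : MeasurableSet s) : |μ.real s - μ'.real s| ≤ tvDist μ μ' := by
  refine le_ciSup (f := fun s : {s : Set X // MeasurableSet s} ↦ |μ.real s - μ'.real s|)
    ⟨μ.real univ + μ'.real univ, ?_⟩ ⟨s, hs⟩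
  rintro _ ⟨t, rfl⟩
  have := measureReal_mono (μ := μ) (subset_univ t.1)
  have := measureReal_mono (μ := μ') (subset_univ t.1)
  rw [abs_le]
  constructor <;> linarith [measureReal_nonneg (μ := μ) (s := t.1),
    measureReal_nonneg (μ := μ') (s := t.1)]

lemma tvDist_le_of_forall {D : ℝ}
    (h : ∀ s, MeasurableSet s → |μ.real s - μ'.real s| ≤ D) : tvDist μ μ' ≤ D :=
  have : Nonempty {s : Set X // MeasurableSet s} := ⟨⟨∅, .empty⟩⟩
  ciSup_le fun s ↦ h s.1 s.2

lemma tvDist_triangle [IsFiniteMeasure μ] [IsFiniteMeasure μ'] [IsFiniteMeasure μ''] :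
    tvDist μ μ'' ≤ tvDist μ μ' + tvDist μ' μ'' :=
  tvDist_le_of_forall fun _ hs ↦ (abs_sub_le _ _ _).trans
    (add_le_add (abs_measureReal_sub_le_tvDist hs) (abs_measureReal_sub_le_tvDist hs))

/-- Layer cake: `∫ f dμ = ∫₀^c μ {f ≥ t} dt` for `0 ≤ f ≤ c`. -/
lemma abs_integral_sub_integral_le_mul_tvDist [IsFiniteMeasure μ] [IsFiniteMeasure μ']
    {f : X → ℝ} (hf : Measurable f) {c : ℝ} (hc : 0 ≤ c) (hf0 : ∀ x, 0 ≤ f x)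
    (hfc : ∀ x, f x ≤ c) :
    |∫ x, f x ∂μ - ∫ x, f x ∂μ'| ≤ c * tvDist μ μ' := by
  have hf_int (m : Measure X) [IsFiniteMeasure m] : Integrable f m :=
    .of_bound hf.aestronglyMeasurable c (.of_forall fun x ↦ by
      rw [Real.norm_of_nonneg (hf0 x)]; exact hfc x)
  have hlevel_int (m : Measure X) [IsFiniteMeasure m] :
      IntegrableOn (fun t ↦ m.real {x | t ≤ f x}) (Ioc 0 c) := by
    refine .of_bound measure_Ioc_lt_top ?_ (m.real univ) (.of_forall fun t ↦ ?_)
    · exact (Antitone.measurable (f := fun t ↦ m.real {x | t ≤ f x})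
        fun _ _ hst ↦ measureReal_mono fun _ h ↦ hst.trans h).aestronglyMeasurable
    · rw [Real.norm_of_nonneg measureReal_nonneg]
      exact measureReal_mono (subset_univ _)
  rw [(hf_int μ).integral_eq_integral_Ioc_meas_le (.of_forall hf0) (.of_forall hfc),
    (hf_int μ').integral_eq_integral_Ioc_meas_le (.of_forall hf0) (.of_forall hfc),
    ← integral_sub (hlevel_int μ) (hlevel_int μ'), ← Real.norm_eq_abs]
  calc ‖∫ t in Ioc 0 c, (μ.real {x | t ≤ f x} - μ'.real {x | t ≤ f x})‖
      ≤ tvDist μ μ' * volume.real (Ioc 0 c) :=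
        norm_setIntegral_le_of_norm_le_const measure_Ioc_lt_top fun _ _ ↦
          abs_measureReal_sub_le_tvDist (hf measurableSet_Ici)
    _ = c * tvDist μ μ' := by
        rw [Real.volume_real_Ioc_of_le hc, sub_zero, mul_comm]

end MeasureTheory

namespace ProbabilityTheory

variable {X Y : Type*} [MeasurableSpace X] [MeasurableSpace Y]

lemma Kernel.integrable_measureReal_apply (κ : Kernel X Y) [IsFiniteKernel κ]
    (μ : Measure X) [IsFiniteMeasure μ] {s : Set Y} (hs : MeasurableSet s) :
    Integrable (fun x ↦ (κ x).real s) μ :=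
  .of_bound (κ.measurable_coe hs).ennreal_toReal.aestronglyMeasurable
    κ.bound.toReal (.of_forall fun x ↦ by
      rw [Real.norm_of_nonneg measureReal_nonneg]
      exact ENNReal.toReal_mono κ.bound_ne_top (κ.measure_le_bound x s))

lemma Kernel.measureReal_bind (κ : Kernel X Y) [IsFiniteKernel κ] (μ : Measure X)
    {s : Set Y} (hs : MeasurableSet s) : (μ.bind κ).real s = ∫ x, (κ x).real s ∂μ := by
  rw [measureReal_def, Measure.bind_apply hs κ.measurable.aemeasurable,
    ← integral_toReal (κ.measurable_coe hs).aemeasurable (.of_forall fun _ ↦ measure_lt_top _ _)]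
  rfl

lemma Kernel.tvDist_bind_le_of_forall (κ η : Kernel X Y) [IsFiniteKernel κ] [IsFiniteKernel η]
    (μ : Measure X) [IsProbabilityMeasure μ] {δ : ℝ}
    (h : ∀ x s, MeasurableSet s → |(κ x).real s - (η x).real s| ≤ δ) :
    tvDist (μ.bind κ) (μ.bind η) ≤ δ := by
  refine tvDist_le_of_forall fun s hs ↦ ?_
  rw [κ.measureReal_bind μ hs, η.measureReal_bind μ hs, ← integral_sub
    (κ.integrable_measureReal_apply μ hs) (η.integrable_measureReal_apply μ hs),
    ← Real.norm_eq_abs]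
  simpa using norm_integral_le_of_norm_le_const (μ := μ)
    (f := fun x ↦ (κ x).real s - (η x).real s) (.of_forall fun x ↦ h x s hs)

def DoeblinMinorization (κ : Kernel X Y) (ε : ℝ) (ν : Measure Y) : Prop :=
  ∀ x s, MeasurableSet s → ENNReal.ofReal ε * ν s ≤ κ x s

namespace DoeblinMinorization

variable {κ : Kernel X Y} {ε : ℝ} {ν : Measure Y}

lemma mul_measureReal_le [IsFiniteKernel κ] (h : DoeblinMinorization κ ε ν) (hε : 0 ≤ ε)
    (x : X) {s : Set Y} (hs : MeasurableSet s) : ε * ν.real s ≤ (κ x).real s := by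
  simpa [measureReal_def, ENNReal.toReal_mul, ENNReal.toReal_ofReal hε] using
    ENNReal.toReal_mono (measure_ne_top _ _) (h x s hs)

/-- The residual kernel `κ(x, s) - ε ν(s)` has total mass `1 - ε`. -/
lemma sub_mul_measureReal_mem_Icc [IsMarkovKernel κ] [IsProbabilityMeasure ν]
    (h : DoeblinMinorization κ ε ν) (hε : 0 ≤ ε) (x : X) {s : Set Y} (hs : MeasurableSet s) :
    (κ x).real s - ε * ν.real s ∈ Icc 0 (1 - ε) := by
  have hs_le := h.mul_measureReal_le hε x hs
  have hsc_le := h.mul_measureReal_le hε x hs.compl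
  rw [measureReal_compl hs, measureReal_compl hs, probReal_univ, probReal_univ] at hsc_le
  constructor <;> linarith

lemma tvDist_bind_le [IsMarkovKernel κ] [IsProbabilityMeasure ν]
    (h : DoeblinMinorization κ ε ν) (hε0 : 0 ≤ ε) (hε1 : ε ≤ 1)
    (μ μ' : Measure X) [IsProbabilityMeasure μ] [IsProbabilityMeasure μ'] :
    tvDist (μ.bind κ) (μ'.bind κ) ≤ (1 - ε) * tvDist μ μ' := by
  refine tvDist_le_of_forall fun s hs ↦ ?_
  have hbind (m : Measure X) [IsProbabilityMeasure m] :
      (m.bind κ).real s = ∫ x, ((κ x).real s - ε * ν.real s) ∂m + ε * ν.real s := by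
    rw [κ.measureReal_bind m hs, integral_sub (κ.integrable_measureReal_apply m hs)
      (integrable_const _), integral_const, probReal_univ, one_smul, sub_add_cancel]
  rw [hbind μ, hbind μ', add_sub_add_right_eq_sub]
  exact abs_integral_sub_integral_le_mul_tvDist
    ((κ.measurable_coe hs).ennreal_toReal.sub measurable_const) (sub_nonneg.2 hε1)
    (fun x ↦ (h.sub_mul_measureReal_mem_Icc hε0 x hs).1)
    (fun x ↦ (h.sub_mul_measureReal_mem_Icc hε0 x hs).2)

theorem tvDist_invariant_le_div {κ' : Kernel X X} {ν : Measure X} [IsMarkovKernel κ']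
    [IsProbabilityMeasure ν] (h : DoeblinMinorization κ' ε ν) (hε0 : 0 < ε) (hε1 : ε ≤ 1)
    {κ : Kernel X X} [IsFiniteKernel κ] {π π' : Measure X} [IsProbabilityMeasure π]
    [IsProbabilityMeasure π'] (hπ : π.bind κ = π) (hπ' : π'.bind κ' = π') {δ : ℝ}
    (hclose : ∀ x s, MeasurableSet s → |(κ' x).real s - (κ x).real s| ≤ δ) :
    tvDist π' π ≤ δ / ε := by
  have hcontr : tvDist π' π ≤ (1 - ε) * tvDist π' π + δ :=
    calc tvDist π' π = tvDist (π'.bind κ') (π.bind κ) := by rw [hπ, hπ']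
      _ ≤ tvDist (π'.bind κ') (π.bind κ') + tvDist (π.bind κ') (π.bind κ) := tvDist_triangle
      _ ≤ (1 - ε) * tvDist π' π + δ :=
        add_le_add (h.tvDist_bind_le hε0.le hε1 π' π) (κ'.tvDist_bind_le_of_forall κ π hclose)
  rw [le_div_iff₀ hε0]
  linarith

end DoeblinMinorization

end ProbabilityTheory

theorem stmt_10_general {X : Type*} [MeasurableSpace X]
    (K Kt : Kernel X X) [IsMarkovKernel K] [IsMarkovKernel Kt]
    (ν : Measure X) [IsProbabilityMeasure ν]
    (εl ε : ℝ) (h0 : 0 < εl) (h1 : εl ≤ ε) (h2 : ε < 1)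
    (hminKt : ∀ x A, MeasurableSet A → ENNReal.ofReal ε * ν A ≤ Kt x A)
    (π πt : Measure X) [IsProbabilityMeasure π] [IsProbabilityMeasure πt]
    (hπ : π.bind (fun x => K x) = π) (hπt : πt.bind (fun x => Kt x) = πt)
    (hclose : ∀ x A, MeasurableSet A → |(Kt x A).toReal - (K x A).toReal| ≤ ε - εl) :
    ∀ A, MeasurableSet A → |(πt A).toReal - (π A).toReal| ≤ 1 - εl / ε := by
  intro A hA
  have hε : 0 < ε := h0.trans_le h1
  calc |(πt A).toReal - (π A).toReal| ≤ tvDist πt π := abs_measureReal_sub_le_tvDist hA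
    _ ≤ (ε - εl) / ε :=
      DoeblinMinorization.tvDist_invariant_le_div hminKt hε h2.le hπ hπt hclose
    _ = 1 - εl / ε := by field_simp

/-- sensitivity of invariant distributions: if the Markov kernels K (= Π)
and Kt (= Π̃) satisfy Doeblin minorizations with constants ε̲ ≤ ε w.r.t. the same ν,
and their one-step total-variation distance is at most ε - ε̲, then the invariant
distributions satisfy ‖π̃ - π‖_TV ≤ 1 - ε̲/ε. -/
theorem stmt_10 {X : Type*} [MeasurableSpace X]
    (K Kt : Kernel X X) [IsMarkovKernel K] [IsMarkovKernel Kt]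
    (ν : Measure X) [IsProbabilityMeasure ν]
    (εl ε : ℝ) (h0 : 0 < εl) (h1 : εl ≤ ε) (h2 : ε < 1)
    (hminK : ∀ x A, MeasurableSet A → ENNReal.ofReal εl * ν A ≤ K x A)
    (hminKt : ∀ x A, MeasurableSet A → ENNReal.ofReal ε * ν A ≤ Kt x A)
    (π πt : Measure X) [IsProbabilityMeasure π] [IsProbabilityMeasure πt]
    (hπ : π.bind (fun x => K x) = π) (hπt : πt.bind (fun x => Kt x) = πt)
    (hclose : ∀ x A, MeasurableSet A → |(Kt x A).toReal - (K x A).toReal| ≤ ε - εl) :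
    ∀ A, MeasurableSet A → |(πt A).toReal - (π A).toReal| ≤ 1 - εl / ε :=
  stmt_10_general K Kt ν εl ε h0 h1 h2 hminKt π πt hπ hπt hclose
end

section
/- Let Π be a Markov kernel on X with Π(x,{a}) = p(x) ≥ ε̲ > 0 for all x, where a ∈ X is a singleton atom, and let ε ∈ (ε̲, 1). Define the modified residual kernel R̃(x,dy) := (Π(x,dy) - min{ε, p(x)}δ_a(dy))/(1 - min{ε, p(x)}) and Π̃(x,dy) := ε δ_a(dy) + (1-ε) R̃(x,dy). Then for every x ∈ X and A ∈ B(X), |Π(x,A) - Π̃(x,A)| = |Π(x,A) - δ_a(A)| · (ε - min{ε,p(x)})/(1 - min{ε,p(x)}) ≤ ε - ε̲. -/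
open MeasureTheory ProbabilityTheory Classical

/-- the modified kernel Π̃(x,·) = ε δ_a + (1-ε) R̃(x,·) obtained with
the truncated residual R̃ satisfies, for every x and measurable A,
|Π(x,A) - Π̃(x,A)| = |Π(x,A) - δ_a(A)| (ε - min{ε,p(x)})/(1 - min{ε,p(x)}) ≤ ε - ε̲. -/
theorem stmt_11 {X : Type*} [MeasurableSpace X] [MeasurableSingletonClass X]
    (K : Kernel X X) [IsMarkovKernel K] (a : X) (εl ε : ℝ)
    (h0 : 0 < εl) (h1 : εl < ε) (h2 : ε < 1)
    (hp : ∀ x, εl ≤ (K x {a}).toReal) :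
    ∀ x A, MeasurableSet A →
      |(K x A).toReal -
          (ε * (if a ∈ A then (1 : ℝ) else 0) +
            (1 - ε) * (((K x A).toReal -
                min ε ((K x {a}).toReal) * (if a ∈ A then (1 : ℝ) else 0)) /
              (1 - min ε ((K x {a}).toReal))))|
        = |(K x A).toReal - (if a ∈ A then (1 : ℝ) else 0)| *
            ((ε - min ε ((K x {a}).toReal)) / (1 - min ε ((K x {a}).toReal)))
      ∧ |(K x A).toReal - (if a ∈ A then (1 : ℝ) else 0)| *
            ((ε - min ε ((K x {a}).toReal)) / (1 - min ε ((K x {a}).toReal)))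
          ≤ ε - εl := by
  intro x A hA
  have hprob : IsProbabilityMeasure (K x) := IsMarkovKernel.isProbabilityMeasure x
  set p := (K x {a}).toReal with hpdef
  set q := (K x A).toReal with hqdef
  set δ := (if a ∈ A then (1 : ℝ) else 0) with hδdef
  set m := min ε p with hmdef
  have hq0 : 0 ≤ q := ENNReal.toReal_nonneg
  have hq1 : q ≤ 1 := by
    have h := (prob_le_one (μ := K x) (s := A))
    have := ENNReal.toReal_mono (by simp) h
    simpa using this
  have hm1 : εl ≤ m := le_min h1.le (hp x)
  have hm2 : m ≤ ε := min_le_left _ _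
  have hm3 : m < 1 := lt_of_le_of_lt hm2 h2
  have hden : (0:ℝ) < 1 - m := by linarith
  have hdenl : (0:ℝ) < 1 - εl := by linarith
  have hδb : |q - δ| ≤ 1 - εl := by
    by_cases ha : a ∈ A
    · have hsub : ({a} : Set X) ⊆ A := Set.singleton_subset_iff.mpr ha
      have hle : p ≤ q :=
        ENNReal.toReal_mono (measure_ne_top _ _) (measure_mono hsub)
      have hεlq : εl ≤ q := le_trans (hp x) hle
      simp only [hδdef, if_pos ha]
      rw [abs_sub_comm, abs_of_nonneg (by linarith)]
      linarith
    · have hdisj : Disjoint A ({a} : Set X) := by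
        simp [Set.disjoint_singleton_right, ha]
      have hun : K x (A ∪ {a}) = K x A + K x {a} :=
        measure_union hdisj (measurableSet_singleton a)
      have hle1 : K x A + K x {a} ≤ 1 := by
        rw [← hun]; exact prob_le_one
      have : q + p ≤ 1 := by
        have := ENNReal.toReal_mono (by simp) hle1
        rwa [ENNReal.toReal_add (measure_ne_top _ _) (measure_ne_top _ _), ENNReal.toReal_one] at this
      simp only [hδdef, if_neg ha]
      rw [sub_zero, abs_of_nonneg hq0]
      linarith [hp x]
  have hkey : q - (ε * δ + (1 - ε) * ((q - m * δ) / (1 - m)))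
      = (q - δ) * ((ε - m) / (1 - m)) := by
    field_simp
    ring
  have hcnn : 0 ≤ (ε - m) / (1 - m) := div_nonneg (by linarith) hden.le
  constructor
  · rw [hkey, abs_mul, abs_of_nonneg hcnn]
  · have hcb : (ε - m) / (1 - m) ≤ (ε - εl) / (1 - εl) := by
      rw [div_le_div_iff₀ hden hdenl]
      nlinarith
    calc |q - δ| * ((ε - m) / (1 - m))
        ≤ (1 - εl) * ((ε - εl) / (1 - εl)) :=
          mul_le_mul hδb hcb hcnn (by linarith)
      _ = ε - εl := by field_simp
end

section
/- Let Π be a uniformly ergodic Markov kernel on X, i.e., Π^m(x,A) ≥ ε ν(A) for all x ∈ X, A ∈ B(X), for some m ∈ ℕ, ε > 0 and probability measure ν. Let X̌ = X ∪ {a} and let Π̌ be a Markov kernel on X̌ with Π̌(a, X) > 0 and Π̌(x,A) ≥ w Π(x,A) for all x ∈ X, A ∈ B(X), for some w > 0. Then Π̌^{m+1}(x,A) ≥ min{w, Π̌(a,X)} w^m ε ν(A) for all x ∈ X̌ and A ∈ B(X); in particular Π̌ is uniformly ergodic. -/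
/-!
Iterating the domination `Π̌(x, ·) ≥ w Π(x, ·)` on `X` gives `Π̌ⁿ(x, ·) ≥ wⁿ Πⁿ(x, ·)` on `X`, so
`Π̌ᵐ(y, A) ≥ wᵐ ε ν(A)` for every `y ∈ X`. One more step of `Π̌` from any `x ∈ X̌` puts mass
at least `min {w, Π̌(a, X)}` on `X`, which gives the minorization of `Π̌ᵐ⁺¹`.
-/

open MeasureTheory ProbabilityTheory

noncomputable def kpow {X : Type*} [MeasurableSpace X] (κ : Kernel X X) : ℕ → Kernel X X
  | 0 => Kernel.id
  | n + 1 => (kpow κ n).comp κ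

open scoped ENNReal

section Comap

variable {X Y : Type*}

theorem measurableEmbedding_comap [mY : MeasurableSpace Y] {e : X → Y}
    (he : Function.Injective e) (hrange : MeasurableSet (Set.range e)) :
    @MeasurableEmbedding X Y (mY.comap e) mY e :=
  @MeasurableEmbedding.mk X Y (mY.comap e) mY e he (comap_measurable e) <| by
    rintro _ ⟨T, hT, rfl⟩
    rw [Set.image_preimage_eq_inter_range]
    exact hT.inter hrange

theorem lintegral_comp_le_of_measurableEmbedding [MeasurableSpace X] [MeasurableSpace Y]
    {e : X → Y} (he : MeasurableEmbedding e) (ρ : Measure Y) {g : Y → ℝ≥0∞}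
    (hg : Measurable g) :
    ∫⁻ x, g (e x) ∂(ρ.comap e) ≤ ∫⁻ y, g y ∂ρ := by
  rw [← lintegral_map hg he.measurable, he.map_comap]
  exact setLIntegral_le_lintegral _ _

/-- `e` need not be measurable; it becomes a measurable embedding once `X` carries the
σ-algebra pulled back from `Y`, which refines the given one since images of measurable sets
are measurable. -/
theorem lintegral_le_lintegral_of_le_image [mX : MeasurableSpace X] [mY : MeasurableSpace Y]
    {e : X → Y} (he : Function.Injective e)
    (himage : ∀ A, MeasurableSet A → MeasurableSet (e '' A))
    {μ : Measure X} {ρ : Measure Y} (hμρ : ∀ A, MeasurableSet A → μ A ≤ ρ (e '' A))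
    {f : X → ℝ≥0∞} {g : Y → ℝ≥0∞} (hf : Measurable f) (hg : Measurable g)
    (hfg : ∀ x, f x ≤ g (e x)) :
    ∫⁻ x, f x ∂μ ≤ ∫⁻ y, g y ∂ρ := by
  have hle : mX ≤ mY.comap e := fun A hA => ⟨e '' A, himage A hA, he.preimage_image A⟩
  have hE := measurableEmbedding_comap (mY := mY) he (Set.image_univ ▸ himage _ .univ)
  let ρ' := @Measure.comap X Y (mY.comap e) mY e ρ
  have hμ : μ ≤ ρ'.trim hle := Measure.le_iff.2 fun A hA => by
    rw [trim_measurableSet_eq hle hA, hE.comap_apply]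
    exact hμρ A hA
  calc ∫⁻ x, f x ∂μ ≤ ∫⁻ x, f x ∂(ρ'.trim hle) := lintegral_mono' hμ le_rfl
    _ = @lintegral X (mY.comap e) ρ' f := lintegral_trim hle hf
    _ ≤ @lintegral X (mY.comap e) ρ' (g ∘ e) := @lintegral_mono X (mY.comap e) ρ' _ _ hfg
    _ ≤ ∫⁻ y, g y ∂ρ :=
      @lintegral_comp_le_of_measurableEmbedding X Y (mY.comap e) mY e hE ρ g hg

end Comap

section Kpow

variable {X Y : Type*} [MeasurableSpace X] [MeasurableSpace Y]

theorem kpow_succ_apply (κ : Kernel X X) (n : ℕ) (x : X) {s : Set X} (hs : MeasurableSet s) :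
    kpow κ (n + 1) x s = ∫⁻ y, kpow κ n y s ∂(κ x) :=
  Kernel.comp_apply' _ _ _ hs

theorem pow_mul_kpow_le_kpow_image {e : X → Y} (he : Function.Injective e)
    (himage : ∀ A, MeasurableSet A → MeasurableSet (e '' A))
    {κ : Kernel X X} {η : Kernel Y Y} {c : ℝ≥0∞}
    (hdom : ∀ x A, MeasurableSet A → c * κ x A ≤ η (e x) (e '' A))
    (n : ℕ) (x : X) {A : Set X} (hA : MeasurableSet A) :
    c ^ n * kpow κ n x A ≤ kpow η n (e x) (e '' A) := by
  induction n generalizing x with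
  | zero =>
    simp only [kpow, pow_zero, one_mul, Kernel.id_apply, Measure.dirac_apply' x hA]
    by_cases hx : x ∈ A
    · simp [hx, Measure.dirac_apply_of_mem (Set.mem_image_of_mem e hx)]
    · simp [hx]
  | succ n ih =>
    rw [kpow_succ_apply _ _ _ hA, kpow_succ_apply _ _ _ (himage A hA), pow_succ, mul_comm _ c,
      mul_assoc, ← lintegral_const_mul _ (Kernel.measurable_coe _ hA), ← smul_eq_mul,
      ← lintegral_smul_measure]
    refine lintegral_le_lintegral_of_le_image he himage (fun B hB => hdom x B hB)
      ((Kernel.measurable_coe _ hA).const_mul _) (Kernel.measurable_coe _ (himage A hA)) ih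

theorem mul_measure_le_kpow_succ (η : Kernel Y Y) {n : ℕ} {s T : Set Y} (hs : MeasurableSet s)
    {c : ℝ≥0∞} (hT : ∀ y ∈ T, c ≤ kpow η n y s) (y : Y) :
    c * η y T ≤ kpow η (n + 1) y s := by
  rw [kpow_succ_apply _ _ _ hs]
  calc c * η y T ≤ c * η y {z | c ≤ kpow η n z s} := by gcongr; exact hT
    _ ≤ _ := mul_meas_ge_le_lintegral₀ (Kernel.measurable_coe _ hs).aemeasurable c

end Kpow

theorem stmt_12_general {X : Type*} [MeasurableSpace X] [MeasurableSpace (Option X)]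
    (K : Kernel X X) [IsMarkovKernel K]
    (Kc : Kernel (Option X) (Option X))
    (ν : Measure X) (ε w : ℝ)
    (m : ℕ)
    (hsome : ∀ A : Set X, MeasurableSet A → MeasurableSet (Option.some '' A))
    (hmin : ∀ x A, MeasurableSet A → ENNReal.ofReal ε * ν A ≤ kpow K m x A)
    (hmod : ∀ x A, MeasurableSet A →
      ENNReal.ofReal w * K x A ≤ Kc (some x) (Option.some '' A)) :
    ∀ (x : Option X) (A : Set X), MeasurableSet A →
      min (ENNReal.ofReal w) (Kc none (Set.range Option.some)) * (ENNReal.ofReal w) ^ m *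
          ENNReal.ofReal ε * ν A
        ≤ kpow Kc (m + 1) x (Option.some '' A) := by
  intro x A hA
  have hfloor : ∀ y ∈ Set.range some,
      ENNReal.ofReal w ^ m * ENNReal.ofReal ε * ν A ≤ kpow Kc m y (some '' A) := by
    rintro _ ⟨z, rfl⟩
    calc ENNReal.ofReal w ^ m * ENNReal.ofReal ε * ν A
        = ENNReal.ofReal w ^ m * (ENNReal.ofReal ε * ν A) := mul_assoc _ _ _
      _ ≤ ENNReal.ofReal w ^ m * kpow K m z A := by gcongr; exact hmin z A hA
      _ ≤ kpow Kc m (some z) (some '' A) :=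
        pow_mul_kpow_le_kpow_image (Option.some_injective X) hsome hmod m z hA
  have henter : min (ENNReal.ofReal w) (Kc none (Set.range some)) ≤ Kc x (Set.range some) := by
    cases x with
    | none => exact min_le_right _ _
    | some z =>
      refine (min_le_left _ _).trans ?_
      simpa [Set.image_univ] using hmod z Set.univ .univ
  calc _ = ENNReal.ofReal w ^ m * ENNReal.ofReal ε * ν A *
        min (ENNReal.ofReal w) (Kc none (Set.range some)) := by ring
    _ ≤ ENNReal.ofReal w ^ m * ENNReal.ofReal ε * ν A * Kc x (Set.range some) := by gcongr
    _ ≤ kpow Kc (m + 1) x (some '' A) := mul_measure_le_kpow_succ Kc (hsome A hA) hfloor x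

/-- if Π is uniformly ergodic (Π^m ≥ εν) and Π̌ on X̌ = X ∪ {a}
(modelled as `Option X` with `none` the atom a) satisfies Π̌(a,X) > 0 and
Π̌(x,·) ≥ wΠ(x,·) on X, then Π̌^{m+1}(x,A) ≥ min{w, Π̌(a,X)} w^m ε ν(A) for all
x ∈ X̌ and measurable A ⊆ X; in particular Π̌ is uniformly ergodic. -/
theorem stmt_12 {X : Type*} [MeasurableSpace X] [MeasurableSpace (Option X)]
    (K : Kernel X X) [IsMarkovKernel K]
    (Kc : Kernel (Option X) (Option X)) [IsMarkovKernel Kc]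
    (ν : Measure X) [IsProbabilityMeasure ν] (ε w : ℝ) (hε : 0 < ε) (hw : 0 < w)
    (m : ℕ)
    (hsome : ∀ A : Set X, MeasurableSet A → MeasurableSet (Option.some '' A))
    (hmin : ∀ x A, MeasurableSet A → ENNReal.ofReal ε * ν A ≤ kpow K m x A)
    (ha : 0 < Kc none (Set.range Option.some))
    (hmod : ∀ x A, MeasurableSet A →
      ENNReal.ofReal w * K x A ≤ Kc (some x) (Option.some '' A)) :
    ∀ (x : Option X) (A : Set X), MeasurableSet A →
      min (ENNReal.ofReal w) (Kc none (Set.range Option.some)) * (ENNReal.ofReal w) ^ m *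
          ENNReal.ofReal ε * ν A
        ≤ kpow Kc (m + 1) x (Option.some '' A) :=
  stmt_12_general K Kc ν ε w m hsome hmin hmod
end

section
/- Let τ_1, ..., τ_n be i.i.d. nonnegative random variables with E(τ_1) < ∞ and E(τ_1²) < ∞. Then E[max{τ_1,...,τ_n}] ≤ E(τ_1) + (n-1) [(E(τ_1²) - E(τ_1)²)/(2n-1)]^{1/2}. -/
/-! Let `F` be the distribution function of `τ₁` and `Q u = inf {x | u ≤ F x}` its quantile
function. On `(0,1)`, `Q` pushes the uniform law forward to the law of `τ₁`, and the law with
density `w v = n vⁿ⁻¹` to the law of `max τᵢ`, whose distribution function is `Fⁿ` by independence.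
Since `∫₀¹ w = 1`, `E[max τᵢ] - E τ₁ = ∫₀¹ Q w - ∫₀¹ Q` is the covariance of `Q` and `w` under the
uniform law, and Cauchy–Schwarz bounds it by `√(Var τ₁) · √(Var w) = √(Var τ₁) · (n-1)/√(2n-1)`. -/

open MeasureTheory ProbabilityTheory Set
open scoped ENNReal

theorem Finset.measurable_sup'' {δ α ι : Type*} [MeasurableSpace δ] [SemilatticeSup α]
    [MeasurableSpace α] [MeasurableSup₂ α] {s : Finset ι} (hs : s.Nonempty) {f : ι → δ → α}
    (hf : ∀ i ∈ s, Measurable (f i)) : Measurable fun x => s.sup' hs fun i => f i x := by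
  convert Finset.measurable_sup' hs hf using 1
  exact funext fun x => (Finset.sup'_apply hs f x).symm

namespace ProbabilityTheory

-- Only meaningful for `u ∈ (0,1)`: for other `u` the `sInf` is a junk value.
noncomputable def quantile (μ : Measure ℝ) (u : ℝ) : ℝ := sInf {x | u ≤ cdf μ x}

section Quantile

variable {μ : Measure ℝ} {u x : ℝ}

lemma nonempty_setOf_le_cdf (hu : u < 1) : {x | u ≤ cdf μ x}.Nonempty :=
  ((tendsto_cdf_atTop μ).eventually_const_le hu).exists

lemma bddBelow_setOf_le_cdf (hu : 0 < u) : BddBelow {x | u ≤ cdf μ x} := by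
  obtain ⟨y, hy⟩ := ((tendsto_cdf_atBot μ).eventually_lt_const hu).exists
  refine ⟨y, fun z hz => le_of_not_gt fun hzy => ?_⟩
  exact (hz.trans (monotone_cdf μ hzy.le)).not_gt hy

lemma le_cdf_quantile (hu : u ∈ Ioo 0 1) : u ≤ cdf μ (quantile μ u) := by
  have hright : ∀ y ∈ Ioi (quantile μ u), u ≤ cdf μ y := fun y hy => by
    obtain ⟨z, hz, hzy⟩ := exists_lt_of_csInf_lt (nonempty_setOf_le_cdf hu.2) hy
    exact hz.trans (monotone_cdf μ hzy.le)
  exact ge_of_tendsto (((cdf μ).right_continuous _).mono Ioi_subset_Ici_self).tendsto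
    (eventually_nhdsWithin_of_forall hright)

lemma quantile_le_iff (hu : u ∈ Ioo 0 1) : quantile μ u ≤ x ↔ u ≤ cdf μ x :=
  ⟨fun h => (le_cdf_quantile hu).trans (monotone_cdf μ h),
    fun h => csInf_le (bddBelow_setOf_le_cdf hu.1) h⟩

lemma monotoneOn_quantile : MonotoneOn (quantile μ) (Ioo 0 1) := fun _ hu _ hv huv =>
  csInf_le_csInf (bddBelow_setOf_le_cdf hu.1) (nonempty_setOf_le_cdf hv.2)
    fun _ hx => huv.trans hx

lemma aemeasurable_quantile {ρ : Measure ℝ} (hρ : ρ ≪ volume.restrict (Ioo 0 1)) :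
    AEMeasurable (quantile μ) ρ :=
  (aemeasurable_restrict_of_monotoneOn measurableSet_Ioo monotoneOn_quantile).mono_ac hρ

lemma map_quantile_apply_Iic {ρ : Measure ℝ} (hρ : ρ ≪ volume.restrict (Ioo 0 1)) (x : ℝ) :
    ρ.map (quantile μ) (Iic x) = ρ (Iic (cdf μ x)) := by
  rw [Measure.map_apply_of_aemeasurable (aemeasurable_quantile hρ) measurableSet_Iic]
  refine measure_congr ?_
  filter_upwards [hρ.ae_le (ae_restrict_mem measurableSet_Ioo)] with u hu
  exact propext (quantile_le_iff hu)

end Quantile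

instance : IsProbabilityMeasure (volume.restrict (Ioo (0 : ℝ) 1)) :=
  ⟨by simp⟩

noncomputable def powerDensity (n : ℕ) (v : ℝ) : ℝ := n * v ^ (n - 1)

noncomputable def powerMeasure (n : ℕ) : Measure ℝ :=
  (volume.restrict (Ioo 0 1)).withDensity fun v => ENNReal.ofReal (powerDensity n v)

section PowerMeasure

variable {n : ℕ}

lemma integral_Ioc_pow (k : ℕ) {c : ℝ} (hc : 0 ≤ c) :
    ∫ v in Ioc 0 c, v ^ k = c ^ (k + 1) / (k + 1) := by
  simp [← intervalIntegral.integral_of_le hc, integral_pow]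

lemma integral_Ioc_powerDensity (hn : 0 < n) {c : ℝ} (hc : 0 ≤ c) :
    ∫ v in Ioc 0 c, powerDensity n v = c ^ n := by
  have hn' : ((n - 1 : ℕ) : ℝ) + 1 = n := by rw [Nat.cast_sub hn]; ring
  unfold powerDensity
  rw [integral_const_mul, integral_Ioc_pow _ hc, Nat.sub_add_cancel hn, hn']
  field_simp

lemma integral_powerDensity (hn : 0 < n) : ∫ v in Ioo 0 1, powerDensity n v = 1 := by
  rw [← integral_Ioc_eq_integral_Ioo, integral_Ioc_powerDensity hn zero_le_one, one_pow]

lemma integral_powerDensity_sq (hn : 0 < n) :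
    ∫ v in Ioo 0 1, powerDensity n v ^ 2 = n ^ 2 / (2 * n - 1) := by
  have hk : (((n - 1) * 2 : ℕ) : ℝ) + 1 = 2 * n - 1 := by push_cast [Nat.cast_sub hn]; ring
  simp_rw [powerDensity, mul_pow, ← pow_mul]
  rw [← integral_Ioc_eq_integral_Ioo, integral_const_mul, integral_Ioc_pow _ zero_le_one, hk,
    one_pow, mul_one_div]

lemma powerDensity_nonneg {v : ℝ} (hv : 0 ≤ v) : 0 ≤ powerDensity n v :=
  mul_nonneg n.cast_nonneg (pow_nonneg hv _)

lemma abs_powerDensity_le {v : ℝ} (hv : v ∈ Ioo 0 1) : |powerDensity n v| ≤ n := by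
  rw [abs_of_nonneg (powerDensity_nonneg hv.1.le)]
  exact mul_le_of_le_one_right n.cast_nonneg (pow_le_one₀ hv.1.le hv.2.le)

lemma continuous_powerDensity : Continuous (powerDensity n) := by
  unfold powerDensity
  fun_prop

lemma memLp_powerDensity (p : ℝ≥0∞) : MemLp (powerDensity n) p (volume.restrict (Ioo 0 1)) :=
  MemLp.of_bound continuous_powerDensity.aestronglyMeasurable n <|
    (ae_restrict_mem measurableSet_Ioo).mono fun _ hv => abs_powerDensity_le hv

lemma variance_powerDensity (hn : 0 < n) :
    Var[powerDensity n; volume.restrict (Ioo 0 1)] = (n - 1) ^ 2 / (2 * n - 1) := by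
  have h2n : (2 * n - 1 : ℝ) ≠ 0 := by
    have : (1 : ℝ) ≤ n := by exact_mod_cast hn
    linarith
  rw [variance_eq_sub (memLp_powerDensity 2)]
  simp only [Pi.pow_apply]
  rw [integral_powerDensity_sq hn, integral_powerDensity hn, one_pow, div_sub_one h2n]
  ring

lemma powerMeasure_Iic (hn : 0 < n) {c : ℝ} (h0 : 0 ≤ c) (h1 : c ≤ 1) :
    powerMeasure n (Iic c) = ENNReal.ofReal (c ^ n) := by
  have hset : Iic c ∩ Ioo 0 1 = Ioc 0 c \ {1} := by
    ext u
    simp only [mem_inter_iff, mem_Iic, mem_Ioo, Set.mem_sdiff, mem_Ioc, mem_singleton_iff]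
    constructor
    · rintro ⟨huc, hu0, hu1⟩
      exact ⟨⟨hu0, huc⟩, hu1.ne⟩
    · rintro ⟨⟨hu0, huc⟩, hu1⟩
      exact ⟨huc, hu0, lt_of_le_of_ne (huc.trans h1) hu1⟩
  have hae : (Iic c ∩ Ioo 0 1 : Set ℝ) =ᵐ[volume] Ioc 0 c :=
    hset ▸ sdiff_null_ae_eq_self (measure_singleton 1)
  rw [powerMeasure, withDensity_apply _ measurableSet_Iic,
    Measure.restrict_restrict measurableSet_Iic, setLIntegral_congr hae,
    ← ofReal_integral_eq_lintegral_ofReal, integral_Ioc_powerDensity hn h0]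
  · exact continuous_powerDensity.integrableOn_Ioc
  · filter_upwards [ae_restrict_mem measurableSet_Ioc] with v hv
    exact powerDensity_nonneg hv.1.le

lemma powerMeasure_one : powerMeasure 1 = volume.restrict (Ioo 0 1) := by
  simp [powerMeasure, powerDensity]

lemma powerMeasure_absolutelyContinuous : powerMeasure n ≪ volume.restrict (Ioo 0 1) :=
  withDensity_absolutelyContinuous _ _

instance : IsFiniteMeasure (powerMeasure n) :=
  isFiniteMeasure_withDensity_ofReal (memLp_one_iff_integrable.1 (memLp_powerDensity 1)).2

lemma integral_powerMeasure (f : ℝ → ℝ) :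
    ∫ v, f v ∂powerMeasure n = ∫ v in Ioo 0 1, powerDensity n v * f v := by
  rw [powerMeasure, integral_withDensity_eq_integral_toReal_smul
    continuous_powerDensity.measurable.ennreal_ofReal (.of_forall fun _ => ENNReal.ofReal_lt_top)]
  refine setIntegral_congr_fun measurableSet_Ioo fun v hv => ?_
  simp [ENNReal.toReal_ofReal (powerDensity_nonneg hv.1.le)]

end PowerMeasure

lemma map_quantile_powerMeasure {μ ν : Measure ℝ} [IsProbabilityMeasure μ] [IsProbabilityMeasure ν]
    {n : ℕ} (hn : 0 < n) (hν : ∀ x, ν (Iic x) = μ (Iic x) ^ n) :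
    (powerMeasure n).map (quantile μ) = ν := by
  refine Measure.ext_of_Iic _ _ fun x => ?_
  rw [map_quantile_apply_Iic powerMeasure_absolutelyContinuous,
    powerMeasure_Iic hn (cdf_nonneg μ x) (cdf_le_one μ x), hν, ← ofReal_cdf,
    ENNReal.ofReal_pow (cdf_nonneg μ x)]

lemma map_quantile_volume {μ : Measure ℝ} [IsProbabilityMeasure μ] :
    (volume.restrict (Ioo 0 1)).map (quantile μ) = μ := by
  simpa [powerMeasure_one] using map_quantile_powerMeasure (μ := μ) (ν := μ) one_pos (by simp)

lemma covariance_le_sqrt_variance_mul_sqrt_variance {Ω : Type*} [MeasurableSpace Ω] {μ : Measure Ω}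
    [IsFiniteMeasure μ] {X Y : Ω → ℝ} (hX : MemLp X 2 μ) (hY : MemLp Y 2 μ) :
    cov[X, Y; μ] ≤ √Var[X; μ] * √Var[Y; μ] := by
  have hX' : MemLp (fun ω => X ω - μ[X]) (ENNReal.ofReal 2) μ := by
    rw [ENNReal.ofReal_ofNat]
    exact hX.sub (memLp_const _)
  have hY' : MemLp (fun ω => Y ω - μ[Y]) (ENNReal.ofReal 2) μ := by
    rw [ENNReal.ofReal_ofNat]
    exact hY.sub (memLp_const _)
  calc cov[X, Y; μ] ≤ |∫ ω, (X ω - μ[X]) * (Y ω - μ[Y]) ∂μ| := le_abs_self _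
    _ ≤ ∫ ω, ‖X ω - μ[X]‖ * ‖Y ω - μ[Y]‖ ∂μ := by
      simp only [Real.norm_eq_abs, ← abs_mul]
      exact abs_integral_le_integral_abs
    _ ≤ (∫ ω, ‖X ω - μ[X]‖ ^ (2 : ℝ) ∂μ) ^ (1 / 2 : ℝ) *
        (∫ ω, ‖Y ω - μ[Y]‖ ^ (2 : ℝ) ∂μ) ^ (1 / 2 : ℝ) :=
      integral_mul_norm_le_Lp_mul_Lq Real.HolderConjugate.two_two hX' hY'
    _ = √Var[X; μ] * √Var[Y; μ] := by
      simp only [Real.rpow_two, Real.norm_eq_abs, sq_abs, ← Real.sqrt_eq_rpow,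
        variance_eq_integral hX.aemeasurable, variance_eq_integral hY.aemeasurable]

section Maximum

variable {Ω ι : Type*} [MeasurableSpace Ω] {P : Measure Ω} [Fintype ι] {X : ι → Ω → ℝ}

lemma iIndepFun.map_sup'_apply_Iic {μ : Measure ℝ} (hindep : iIndepFun X P)
    (hX : ∀ i, Measurable (X i)) (hlaw : ∀ i, P.map (X i) = μ)
    (h : (Finset.univ : Finset ι).Nonempty) (x : ℝ) :
    P.map (fun ω => Finset.univ.sup' h fun i => X i ω) (Iic x) = μ (Iic x) ^ Fintype.card ι := by
  have hpre : (fun ω => Finset.univ.sup' h fun i => X i ω) ⁻¹' Iic x = ⋂ i, X i ⁻¹' Iic x := by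
    ext ω
    simp [Finset.sup'_le_iff]
  rw [Measure.map_apply (Finset.measurable_sup'' h fun i _ => hX i) measurableSet_Iic, hpre,
    hindep.meas_iInter fun i => ⟨Iic x, measurableSet_Iic, rfl⟩]
  have hmarg : ∀ i, P (X i ⁻¹' Iic x) = μ (Iic x) := fun i => by
    rw [← hlaw i, Measure.map_apply (hX i) measurableSet_Iic]
  simp [hmarg]

lemma iIndepFun.integral_sup' {μ : Measure ℝ} [IsProbabilityMeasure P] [IsProbabilityMeasure μ]
    (hindep : iIndepFun X P) (hX : ∀ i, Measurable (X i)) (hlaw : ∀ i, P.map (X i) = μ)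
    (h : (Finset.univ : Finset ι).Nonempty) :
    ∫ ω, Finset.univ.sup' h (fun i => X i ω) ∂P
      = ∫ v in Ioo 0 1, powerDensity (Fintype.card ι) v * quantile μ v := by
  have hM := Finset.measurable_sup'' h fun i _ => hX i
  have := Measure.isProbabilityMeasure_map (μ := P) hM.aemeasurable
  have hcard : 0 < Fintype.card ι := Fintype.card_pos_iff.2 (Finset.univ_nonempty_iff.1 h)
  have hlawM : (powerMeasure (Fintype.card ι)).map (quantile μ) = P.map _ :=
    map_quantile_powerMeasure hcard (hindep.map_sup'_apply_Iic hX hlaw h)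
  calc ∫ ω, Finset.univ.sup' h (fun i => X i ω) ∂P
      = ∫ x, x ∂(P.map _) := (integral_map hM.aemeasurable aestronglyMeasurable_id).symm
    _ = ∫ x, x ∂((powerMeasure (Fintype.card ι)).map (quantile μ)) := by rw [hlawM]
    _ = ∫ v, quantile μ v ∂powerMeasure (Fintype.card ι) :=
        integral_map (aemeasurable_quantile powerMeasure_absolutelyContinuous)
          aestronglyMeasurable_id
    _ = _ := integral_powerMeasure _

end Maximum

lemma integral_powerDensity_mul_quantile_le {μ : Measure ℝ} [IsProbabilityMeasure μ]
    (hμ : MemLp id 2 μ) {n : ℕ} (hn : 0 < n) :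
    ∫ v in Ioo 0 1, powerDensity n v * quantile μ v
      ≤ ∫ x, x ∂μ + (n - 1) * √(Var[id; μ] / (2 * n - 1)) := by
  have hQ : AEMeasurable (quantile μ) (volume.restrict (Ioo 0 1)) :=
    aemeasurable_quantile Measure.AbsolutelyContinuous.rfl
  have hQ2 : MemLp (quantile μ) 2 (volume.restrict (Ioo 0 1)) := by
    rw [← map_quantile_volume (μ := μ)] at hμ
    exact (memLp_map_measure_iff aestronglyMeasurable_id hQ).1 hμ
  have hmean : ∫ x, x ∂μ = ∫ v in Ioo 0 1, quantile μ v := by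
    conv_lhs => rw [← map_quantile_volume (μ := μ)]
    exact integral_map hQ aestronglyMeasurable_id
  have hvar : Var[id; μ] = Var[quantile μ; volume.restrict (Ioo 0 1)] := by
    rw [← variance_id_map hQ, map_quantile_volume]
  have hcov : ∫ v in Ioo 0 1, powerDensity n v * quantile μ v
      = (∫ v in Ioo 0 1, quantile μ v)
        + cov[powerDensity n, quantile μ; volume.restrict (Ioo 0 1)] := by
    rw [covariance_eq_sub (memLp_powerDensity 2) hQ2, integral_powerDensity hn, one_mul]
    simp only [Pi.mul_apply]
    ring
  have hn1 : (1 : ℝ) ≤ n := by exact_mod_cast hn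
  rw [hcov, hmean, hvar, add_le_add_iff_left]
  calc cov[powerDensity n, quantile μ; volume.restrict (Ioo 0 1)]
      ≤ √Var[powerDensity n; volume.restrict (Ioo 0 1)]
        * √Var[quantile μ; volume.restrict (Ioo 0 1)] :=
        covariance_le_sqrt_variance_mul_sqrt_variance (memLp_powerDensity 2) hQ2
    _ = _ := by
        have h2n : (0 : ℝ) ≤ 2 * n - 1 := by linarith
        rw [variance_powerDensity hn, Real.sqrt_div' _ h2n, Real.sqrt_div' _ h2n,
          Real.sqrt_sq (by linarith)]
        ring

end ProbabilityTheory

theorem stmt_16_general {Ω : Type*} [MeasurableSpace Ω] (P : Measure Ω) [IsProbabilityMeasure P]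
    (n : ℕ) (i0 : Fin n)
    (τ : Fin n → Ω → ℝ) (hmeas : ∀ i, Measurable (τ i))
    (hindep : iIndepFun τ P)
    (hid : ∀ i j, P.map (τ i) = P.map (τ j))
    (hint2 : ∀ i, Integrable (fun ω => (τ i ω) ^ 2) P) :
    ∫ ω, Finset.univ.sup' ⟨i0, Finset.mem_univ i0⟩ (fun i => τ i ω) ∂P
      ≤ (∫ ω, τ i0 ω ∂P) +
        ((n : ℝ) - 1) *
          Real.sqrt (((∫ ω, (τ i0 ω) ^ 2 ∂P) - (∫ ω, τ i0 ω ∂P) ^ 2) / (2 * (n : ℝ) - 1)) := by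
  have := Measure.isProbabilityMeasure_map (μ := P) (hmeas i0).aemeasurable
  have hτ : MemLp (τ i0) 2 P :=
    (memLp_two_iff_integrable_sq (hmeas i0).aestronglyMeasurable).2 (hint2 i0)
  have hmean : ∫ x, x ∂(P.map (τ i0)) = ∫ ω, τ i0 ω ∂P :=
    integral_map (hmeas i0).aemeasurable aestronglyMeasurable_id
  have hvar : Var[id; P.map (τ i0)] = (∫ ω, (τ i0 ω) ^ 2 ∂P) - (∫ ω, τ i0 ω ∂P) ^ 2 := by
    rw [variance_id_map (hmeas i0).aemeasurable, variance_eq_sub hτ]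
    rfl
  refine (hindep.integral_sup' hmeas (fun i => hid i i0) _).trans_le ?_
  rw [Fintype.card_fin, ← hvar, ← hmean]
  exact integral_powerDensity_mul_quantile_le
    ((memLp_map_measure_iff aestronglyMeasurable_id (hmeas i0).aemeasurable).2 hτ) i0.pos

/-- Gumbel/Hartley–David bound: for i.i.d. nonnegative τ_1,...,τ_n with
finite first and second moments,
E[max τ_i] ≤ E(τ_1) + (n-1) sqrt((E(τ_1²) - E(τ_1)²)/(2n-1)). -/
theorem stmt_16 {Ω : Type*} [MeasurableSpace Ω] (P : Measure Ω) [IsProbabilityMeasure P]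
    (n : ℕ) (hn : 0 < n) (i0 : Fin n)
    (τ : Fin n → Ω → ℝ) (hmeas : ∀ i, Measurable (τ i))
    (hnonneg : ∀ i ω, 0 ≤ τ i ω)
    (hindep : iIndepFun τ P)
    (hid : ∀ i j, P.map (τ i) = P.map (τ j))
    (hint : ∀ i, Integrable (τ i) P)
    (hint2 : ∀ i, Integrable (fun ω => (τ i ω) ^ 2) P) :
    ∫ ω, Finset.univ.sup' ⟨i0, Finset.mem_univ i0⟩ (fun i => τ i ω) ∂P
      ≤ (∫ ω, τ i0 ω ∂P) +
        ((n : ℝ) - 1) *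
          Real.sqrt (((∫ ω, (τ i0 ω) ^ 2 ∂P) - (∫ ω, τ i0 ω ∂P) ^ 2) / (2 * (n : ℝ) - 1)) :=
  stmt_16_general P n i0 τ hmeas hindep hid hint2
end
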